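/- Let G be an EFL graph of parameter k, i.e., a union of k cliques of order k pairwise intersecting in at most one vertex. If the subgraph induced by the vertices of clique degree at least 2 has maximum degree at most k − 1, then G is k-choosable: ch(G) ≤ k, so the Erdős–Faber–Lovász conjecture (in its list version) holds for such graphs. -/

import Mathlib

open MvPolynomial

/-- An arbitrary linear labeling of a finite vertex type. -/
noncomputable def someLinearOrder (V : Type*) [Fintype V] : LinearOrder V :=
  LinearOrder.lift' (Fintype.equivFin V) (Fintype.equivFin V).injective

/-- The graph polynomial `∏_{ij ∈ E, i<j} (x_i − x_j)` with respect to a given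
linear labeling of the vertices. -/
noncomputable def graphPolyAux {V : Type*} [Fintype V] (lo : LinearOrder V)
    (G : SimpleGraph V) : MvPolynomial V ℤ :=
  letI := lo
  letI := Classical.decRel G.Adj
  ∏ p ∈ Finset.univ.filter (fun p : V × V => G.Adj p.1 p.2 ∧ p.1 < p.2), (X p.1 - X p.2)

/-- The graph polynomial of `G` (its monomial support does not depend on the labeling). -/
noncomputable def graphPoly {V : Type*} [Fintype V] (G : SimpleGraph V) : MvPolynomial V ℤ :=
  graphPolyAux (someLinearOrder V) G

/-- The Alon–Tarsi number of `G`: one plus the minimum, over monomials with nonzero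
coefficient in the graph polynomial, of the maximum exponent of a variable. -/
noncomputable def alonTarsiNumber {V : Type*} [Fintype V] (G : SimpleGraph V) : ℕ :=
  1 + sInf {d : ℕ | ∃ m ∈ (graphPoly G).support, d = Finset.univ.sup fun v => m v}

/-- `G` is colorable from any assignment of lists of size `t`. -/
def Choosable {V : Type*} (G : SimpleGraph V) (t : ℕ) : Prop :=
  ∀ L : V → Finset ℕ, (∀ v, (L v).card = t) →
    ∃ c : V → ℕ, (∀ v, c v ∈ L v) ∧ ∀ ⦃v w⦄, G.Adj v w → c v ≠ c w

/-- The choice number (list chromatic number) of `G`. -/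
noncomputable def choiceNumber {V : Type*} (G : SimpleGraph V) : ℕ :=
  sInf {t : ℕ | Choosable G t}

/-- `M` is a 1-factorization of `G` into `Δ` perfect matchings. -/
def IsOneFactorization {V : Type*} (G : SimpleGraph V) {Δ : ℕ}
    (M : Fin Δ → G.Subgraph) : Prop :=
  (∀ i, (M i).IsPerfectMatching) ∧
  (∀ i j, i ≠ j → Disjoint (M i).edgeSet (M j).edgeSet) ∧
  (⋃ i, (M i).edgeSet) = G.edgeSet

/-- `G` is 1-factorizable into `Δ` perfect matchings. -/
def OneFactorizable {V : Type*} (G : SimpleGraph V) (Δ : ℕ) : Prop :=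
  ∃ M : Fin Δ → G.Subgraph, IsOneFactorization G M

/-- The total graph of `G`, on vertex set `V(G) ⊕ E(G)`. -/
def totalGraph {V : Type*} (G : SimpleGraph V) : SimpleGraph (V ⊕ G.edgeSet) where
  Adj x y := match x, y with
    | .inl v, .inl w => G.Adj v w
    | .inl v, .inr e => v ∈ (e : Sym2 V)
    | .inr e, .inl v => v ∈ (e : Sym2 V)
    | .inr e, .inr f => e ≠ f ∧ ∃ v, v ∈ (e : Sym2 V) ∧ v ∈ (f : Sym2 V)
  symm := by
    constructor
    rintro (v | e) (w | f) h
    · exact h.symm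
    · exact h
    · exact h
    · exact ⟨h.1.symm, h.2.imp fun v hv => ⟨hv.2, hv.1⟩⟩
  loopless := by
    constructor
    rintro (v | e) h
    · exact G.loopless.irrefl v h
    · exact h.1 rfl

/-- The subdivision graph of `G`, on vertex set `V(G) ⊕ E(G)`. -/
def subdivisionGraph {V : Type*} (G : SimpleGraph V) : SimpleGraph (V ⊕ G.edgeSet) where
  Adj x y := match x, y with
    | .inl v, .inr e => v ∈ (e : Sym2 V)
    | .inr e, .inl v => v ∈ (e : Sym2 V)
    | _, _ => False
  symm := by constructor; rintro (v | e) (w | f) h <;> simp_all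
  loopless := by constructor; rintro (v | e) h <;> simp_all

/-- The square of a graph: adjacency at distance 1 or 2. -/
def squareGraph {W : Type*} (H : SimpleGraph W) : SimpleGraph W where
  Adj u v := u ≠ v ∧ (H.Adj u v ∨ ∃ w, H.Adj u w ∧ H.Adj w v)
  symm := ⟨fun u v ⟨hne, h⟩ =>
    ⟨hne.symm, h.imp (fun a => a.symm) fun ⟨w, h1, h2⟩ => ⟨w, h2.symm, h1.symm⟩⟩⟩
  loopless := ⟨fun u h => h.1 rfl⟩

/-!
Order the vertices so that those of clique degree at least `2` come first and colour greedily
from the lists. A vertex of clique degree at least `2` is preceded only by neighbours of clique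
degree at least `2`, of which there are at most `k - 1`; a vertex of clique degree `1` has only
the `k - 1` other vertices of its clique as neighbours. So every vertex sees fewer than `k`
earlier neighbours, and a colour of its list is still free.
-/

section Greedy

variable {V : Type*} [Fintype V] (G : SimpleGraph V) [DecidableRel G.Adj] (r : V → ℕ)

def earlierNeighbors (v : V) : Finset V :=
  Finset.univ.filter fun w => G.Adj v w ∧ r w < r v

/-- The junk value `0` never occurs when every list is longer than the set of earlier
neighbours. -/
noncomputable def greedyColor (L : V → Finset ℕ) (v : V) : ℕ :=
  if h : (L v \ (earlierNeighbors G r v).attach.image fun w => greedyColor L w.1).Nonempty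
  then h.choose else 0
termination_by r v
decreasing_by exact (Finset.mem_filter.mp w.2).2.2

variable {G r}

theorem greedyColor_spec [DecidableEq V] {L : V → Finset ℕ} {v : V}
    (hL : (earlierNeighbors G r v).card < (L v).card) :
    greedyColor G r L v ∈ L v ∧
      ∀ w ∈ earlierNeighbors G r v, greedyColor G r L v ≠ greedyColor G r L w := by
  set used := (earlierNeighbors G r v).attach.image fun w => greedyColor G r L w.1
  have hfree : (L v \ used).Nonempty := by
    have hused : used.card ≤ (earlierNeighbors G r v).card :=
      Finset.card_image_le.trans (Finset.card_attach).le
    have := Finset.card_le_card_sdiff_add_card (s := L v) (t := used)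
    exact Finset.card_pos.mp (by omega)
  have hmem : greedyColor G r L v ∈ L v \ used := by
    rw [greedyColor, dif_pos hfree]
    exact hfree.choose_spec
  rw [Finset.mem_sdiff] at hmem
  refine ⟨hmem.1, fun w hw hcol => hmem.2 ?_⟩
  exact Finset.mem_image.mpr ⟨⟨w, hw⟩, Finset.mem_attach _ _, hcol.symm⟩

theorem choosable_of_card_earlierNeighbors_lt [DecidableEq V] {t : ℕ}
    (hr : Function.Injective r) (hlt : ∀ v, (earlierNeighbors G r v).card < t) :
    Choosable G t := by
  intro L hL
  have hspec v := greedyColor_spec (L := L) (v := v) ((hL v).symm ▸ hlt v)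
  have earlier {v w} (hvw : G.Adj v w) (hrank : r w < r v) : w ∈ earlierNeighbors G r v :=
    Finset.mem_filter.mpr ⟨Finset.mem_univ _, hvw, hrank⟩
  refine ⟨greedyColor G r L, fun v => (hspec v).1, fun v w hvw => ?_⟩
  rcases lt_or_gt_of_ne (hr.ne (G.ne_of_adj hvw)) with hrank | hrank
  · exact ((hspec w).2 v (earlier hvw.symm hrank)).symm
  · exact (hspec v).2 w (earlier hvw hrank)

end Greedy

theorem exists_injective_rank_of_prefix {V : Type*} [Fintype V] (p : V → Prop)
    [DecidablePred p] :
    ∃ r : V → ℕ, Function.Injective r ∧ ∀ v w, p v → ¬ p w → r v < r w := by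
  let e := Fintype.equivFin V
  refine ⟨fun v => (if p v then 0 else Fintype.card V) + e v, fun u v huv => ?_,
    fun v w hv hw => ?_⟩
  · have hu := (e u).2
    have hv := (e v).2
    refine e.injective (Fin.ext ?_)
    by_cases hpu : p u <;> by_cases hpv : p v <;> simp only [hpu, hpv, if_true, if_false] at huv <;>
      omega
  · simp only [hv, hw, if_true, if_false]
    have := (e v).2
    omega

section CliqueCover

variable {V ι : Type*} [Fintype ι] [DecidableEq V] (Q : ι → Finset V)

def cliqueDegree (v : V) : ℕ :=
  (Finset.univ.filter fun i => v ∈ Q i).card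

variable {Q}

theorem mem_erase_of_cliqueDegree_le_one {G : SimpleGraph V}
    (hadj : ∀ u v, G.Adj u v ↔ u ≠ v ∧ ∃ i, u ∈ Q i ∧ v ∈ Q i) {v w : V} {i : ι}
    (hvi : v ∈ Q i) (hv : cliqueDegree Q v ≤ 1) (hvw : G.Adj v w) : w ∈ (Q i).erase v := by
  obtain ⟨hne, j, hvj, hwj⟩ := (hadj v w).mp hvw
  have hji : j = i := Finset.card_le_one.mp hv j (by simpa using hvj) i (by simpa using hvi)
  exact Finset.mem_erase.mpr ⟨hne.symm, hji ▸ hwj⟩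

end CliqueCover

theorem choiceNumber_EFL_le_of_maxDegree_contacts_general {V : Type*} [Fintype V] [DecidableEq V]
    (k : ℕ) (G : SimpleGraph V) [DecidableRel G.Adj] (Q : Fin k → Finset V)
    (hcard : ∀ i, (Q i).card = k)
    (hadj : ∀ u v, G.Adj u v ↔ u ≠ v ∧ ∃ i, u ∈ Q i ∧ v ∈ Q i)
    (hcover : ∀ v, ∃ i, v ∈ Q i)
    (hdeg : ∀ v : V, 2 ≤ (Finset.univ.filter fun i => v ∈ Q i).card →
      (Finset.univ.filter fun w =>
        2 ≤ (Finset.univ.filter fun i => w ∈ Q i).card ∧ G.Adj v w).card ≤ k - 1) :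
    choiceNumber G ≤ k := by
  obtain ⟨r, hr, hfirst⟩ := exists_injective_rank_of_prefix fun v => 2 ≤ cliqueDegree Q v
  refine Nat.sInf_le (choosable_of_card_earlierNeighbors_lt hr fun v => ?_)
  obtain ⟨i, hvi⟩ := hcover v
  have hk : 0 < k := i.pos
  by_cases hv : 2 ≤ cliqueDegree Q v
  · calc (earlierNeighbors G r v).card
        ≤ (Finset.univ.filter fun w => 2 ≤ cliqueDegree Q w ∧ G.Adj v w).card := by
          refine Finset.card_le_card (Finset.monotone_filter_right _ fun w _ hw => ?_)
          exact ⟨not_not.mp fun hw' => (hfirst v w hv hw').not_gt hw.2, hw.1⟩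
      _ ≤ k - 1 := hdeg v hv
      _ < k := by omega
  · calc (earlierNeighbors G r v).card ≤ ((Q i).erase v).card :=
          Finset.card_le_card fun w hw => mem_erase_of_cliqueDegree_le_one hadj hvi (by omega)
            (Finset.mem_filter.mp hw).2.1
      _ = k - 1 := by rw [Finset.card_erase_of_mem hvi, hcard]
      _ < k := by omega

/-- Let `G` be an EFL graph of parameter `k`. If the subgraph induced by
the vertices of clique degree at least `2` has maximum degree at most `k − 1`, then `G` is
`k`-choosable: `ch(G) ≤ k` (the list version of the Erdős–Faber–Lovász conjecture holds
for such graphs). -/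
theorem choiceNumber_EFL_le_of_maxDegree_contacts {V : Type*} [Fintype V] [DecidableEq V]
    (k : ℕ) (G : SimpleGraph V) [DecidableRel G.Adj] (Q : Fin k → Finset V)
    (hcard : ∀ i, (Q i).card = k)
    (hinter : ∀ i j, i ≠ j → (Q i ∩ Q j).card ≤ 1)
    (hadj : ∀ u v, G.Adj u v ↔ u ≠ v ∧ ∃ i, u ∈ Q i ∧ v ∈ Q i)
    (hcover : ∀ v, ∃ i, v ∈ Q i)
    (hdeg : ∀ v : V, 2 ≤ (Finset.univ.filter fun i => v ∈ Q i).card →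
      (Finset.univ.filter fun w =>
        2 ≤ (Finset.univ.filter fun i => w ∈ Q i).card ∧ G.Adj v w).card ≤ k - 1) :
    choiceNumber G ≤ k :=
  choiceNumber_EFL_le_of_maxDegree_contacts_general k G Q hcard hadj hcover hdeg
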